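/- arXiv:2312.16749 — 3 statements merged into one kernel-verified Lean document; each statement's English description precedes it below -/
import Mathlib

section
/- Let 2 ≤ 2k ≤ n and let τ be a partition with ℓ(τ) ≤ k. Let E_max := {n−2k+1, n−2k+3, …, n−1} and τ_max := {T ∈ SSYT(τ,n) : E_max ⇉ T}. Then τ_max = {T ∈ SSYT(τ,n) : T_{i,1} ≥ n−2k+2i−1 for all 1 ≤ i ≤ ℓ(τ)}, and subtracting n−2k from every entry is a bijection from τ_max onto {T̄ ∈ SSYT(τ,2k) : T̄_{i,1} ≥ 2i−1 for all 1 ≤ i ≤ ℓ(τ)} (King's semistandard symplectic tableaux of shape τ in the alphabet 1 < 1̄ < … < k < k̄); in particular #τ_max equals the number of such tableaux. (Lemma 3.10 of the paper; the latter number equals dim U_τ for Sp_{2k} by King's theorem.) -/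
attribute [local instance] Classical.propDecidable

/-!
STATEMENT 6: For 2 ≤ 2k ≤ n and a partition τ with ℓ(τ) ≤ k, with
E_max = {n−2k+1, n−2k+3, …, n−1} and τ_max = {T ∈ SSYT(τ,n) : E_max ⇉ T}, one has
τ_max = {T : T_{i,1} ≥ n−2k+2i−1 for all 1 ≤ i ≤ ℓ(τ)}, and subtracting n−2k from every entry
is a bijection from τ_max onto King's semistandard symplectic tableaux
{T̄ ∈ SSYT(τ,2k) : T̄_{i,1} ≥ 2i−1}; in particular #τ_max equals the number of such tableaux.
Tableaux are encoded as functions t : ℕ → ℕ → ℕ (0-indexed rows and columns, value 0 outside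
the shape), so the 1-based condition `T_{i,1} ≥ n−2k+2i−1` becomes `t i 0 ≥ n−2k+2i+1` for
0-based `i`.
-/

noncomputable section

/-- `i`-th smallest element of a finite set of naturals (0-indexed), junk value `0` if absent. -/
def sortedGet (E : Finset ℕ) (i : ℕ) : ℕ := (E.sort (· ≤ ·)).getD i 0

/-- `t` is a semistandard Young tableau of shape with row lengths `rl` and entries in
`{1,…,N}`: entries weakly increase along rows, strictly increase down columns, and vanish
outside the shape. -/
def IsSSYT (rl : ℕ → ℕ) (N : ℕ) (t : ℕ → ℕ → ℕ) : Prop :=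
  (∀ i j, j < rl i → 1 ≤ t i j ∧ t i j ≤ N) ∧
  (∀ i j, ¬ j < rl i → t i j = 0) ∧
  (∀ i j1 j2, j1 ≤ j2 → j2 < rl i → t i j1 ≤ t i j2) ∧
  (∀ i1 i2 j, i1 < i2 → j < rl i2 → t i1 j < t i2 j)

/-- The set `ℰ` of endpoint sets: `E = {e_1 < … < e_k} ⊆ {1,…,n−1}` with
`e_i ≤ n − 2k + 2i − 1` for all `i` (0-indexed below). -/
def spE (n k : ℕ) : Set (Finset ℕ) :=
  {E | E ⊆ Finset.Icc 1 (n - 1) ∧ E.card = k ∧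
    ∀ i, i < k → sortedGet E i ≤ n - 2 * k + 2 * i + 1}

/-- `E` is compatible with the tableau `t` of shape `τ`: the sorted entries of `E` satisfy
`e_i ≤ T_{i,1}` for all rows `i` of the shape. -/
def CompatET (τ : ℕ → ℕ) (E : Finset ℕ) (t : ℕ → ℕ → ℕ) : Prop :=
  ∀ i, 0 < τ i → sortedGet E i ≤ t i 0

/-- `E ⇉ T`: `E` is the entrywise largest element of `ℰ` compatible with `T`. -/
def EtoT (n k : ℕ) (τ : ℕ → ℕ) (E : Finset ℕ) (t : ℕ → ℕ → ℕ) : Prop :=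
  E ∈ spE n k ∧ CompatET τ E t ∧
    ∀ E' ∈ spE n k, CompatET τ E' t → ∀ i, sortedGet E' i ≤ sortedGet E i

/-- `E_max = {n−2k+1, n−2k+3, …, n−1}`. -/
def Emax (n k : ℕ) : Finset ℕ := (Finset.range k).image fun i => n - 2 * k + 2 * i + 1

private lemma sortedGet_eq {E : Finset ℕ} {k : ℕ} (h : E.card = k) {i : ℕ} (hi : i < k) :
    sortedGet E i = E.orderEmbOfFin h ⟨i, hi⟩ := by
  have hl : i < (E.sort (· ≤ ·)).length := by rw [Finset.length_sort, h]; exact hi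
  rw [Finset.orderEmbOfFin_apply, sortedGet, List.getD_eq_getElem _ _ hl]
  simp

private lemma sortedGet_of_le {E : Finset ℕ} {k : ℕ} (h : E.card = k) {i : ℕ} (hi : k ≤ i) :
    sortedGet E i = 0 := by
  rw [sortedGet, List.getD_eq_default]
  rw [Finset.length_sort, h]; exact hi

private lemma emax_card (n k : ℕ) : (Emax n k).card = k := by
  rw [Emax, Finset.card_image_of_injective _ (fun a b hab => by omega), Finset.card_range]

private lemma sortedGet_emax (n k : ℕ) {i : ℕ} (hi : i < k) :
    sortedGet (Emax n k) i = n - 2 * k + 2 * i + 1 := by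
  have hc := emax_card n k
  have hsm : StrictMono (fun j : Fin k => n - 2 * k + 2 * (j : ℕ) + 1) := by
    intro a b hab
    have : (a : ℕ) < b := hab
    simp only []
    omega
  let f : Fin k ↪o ℕ := OrderEmbedding.ofStrictMono _ hsm
  have hmem : ∀ j : Fin k, f j ∈ Emax n k := fun j =>
    Finset.mem_image.2 ⟨j, Finset.mem_range.2 j.2, rfl⟩
  have huniq := Finset.orderEmbOfFin_unique' hc hmem
  rw [sortedGet_eq hc hi, ← huniq]
  rfl

private lemma emax_mem_spE (n k : ℕ) (hkn : 2 * k ≤ n) : Emax n k ∈ spE n k := by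
  refine ⟨?_, emax_card n k, ?_⟩
  · intro x hx
    obtain ⟨i, hi, rfl⟩ := Finset.mem_image.mp hx
    rw [Finset.mem_range] at hi
    rw [Finset.mem_Icc]
    omega
  · intro i hi
    rw [sortedGet_emax n k hi]

/-- **Lemma 3.10.**  Let `2 ≤ 2k ≤ n` and let `τ` be a partition with at most `k` parts.  Then
`τ_max := {T ∈ SSYT(τ,n) : E_max ⇉ T}` equals
`{T ∈ SSYT(τ,n) : T_{i,1} ≥ n−2k+2i−1 for all rows i}`, and subtracting `n−2k` from every entry
is a bijection from `τ_max` onto the set of King's semistandard symplectic tableaux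
`{T̄ ∈ SSYT(τ,2k) : T̄_{i,1} ≥ 2i−1 for all rows i}`; in particular `#τ_max` equals the number
of such tableaux. -/
theorem sp_tau_max (n k : ℕ) (hk : 1 ≤ k) (hkn : 2 * k ≤ n)
    (τ : ℕ → ℕ) (hτ : Antitone τ) (hτk : ∀ i, k ≤ i → τ i = 0) :
    ({t | IsSSYT τ n t ∧ EtoT n k τ (Emax n k) t} =
      {t | IsSSYT τ n t ∧ ∀ i, 0 < τ i → n - 2 * k + 2 * i + 1 ≤ t i 0}) ∧
    Set.BijOn (fun t (i j : ℕ) => if j < τ i then t i j - (n - 2 * k) else 0)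
      {t | IsSSYT τ n t ∧ EtoT n k τ (Emax n k) t}
      {t' | IsSSYT τ (2 * k) t' ∧ ∀ i, 0 < τ i → 2 * i + 1 ≤ t' i 0} ∧
    Set.ncard {t | IsSSYT τ n t ∧ EtoT n k τ (Emax n k) t} =
      Set.ncard {t' | IsSSYT τ (2 * k) t' ∧ ∀ i, 0 < τ i → 2 * i + 1 ≤ t' i 0} := by
  have hik : ∀ i, 0 < τ i → i < k := by
    intro i hi
    by_contra h
    exact absurd (hτk i (le_of_not_gt h)) (by omega)
  have hset : {t | IsSSYT τ n t ∧ EtoT n k τ (Emax n k) t} =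
      {t : ℕ → ℕ → ℕ | IsSSYT τ n t ∧ ∀ i, 0 < τ i → n - 2 * k + 2 * i + 1 ≤ t i 0} := by
    ext t
    simp only [Set.mem_setOf_eq]
    constructor
    · rintro ⟨hS, _, hcomp, _⟩
      refine ⟨hS, fun i hi => ?_⟩
      have := hcomp i hi
      rwa [sortedGet_emax n k (hik i hi)] at this
    · rintro ⟨hS, hcond⟩
      refine ⟨hS, emax_mem_spE n k hkn, fun i hi => ?_, fun E' hE' _ i => ?_⟩
      · rw [sortedGet_emax n k (hik i hi)]
        exact hcond i hi
      · rcases lt_or_ge i k with h | h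
        · rw [sortedGet_emax n k h]
          exact hE'.2.2 i h
        · rw [sortedGet_of_le hE'.2.1 h]
          exact Nat.zero_le _
  have hbij : Set.BijOn (fun t (i j : ℕ) => if j < τ i then t i j - (n - 2 * k) else 0)
      {t | IsSSYT τ n t ∧ EtoT n k τ (Emax n k) t}
      {t' | IsSSYT τ (2 * k) t' ∧ ∀ i, 0 < τ i → 2 * i + 1 ≤ t' i 0} := by
    rw [hset]
    -- key fact: entries in the shape exceed n - 2k
    have hkey : ∀ t : ℕ → ℕ → ℕ, (IsSSYT τ n t ∧ ∀ i, 0 < τ i → n - 2 * k + 2 * i + 1 ≤ t i 0) →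
        ∀ i j, j < τ i → n - 2 * k < t i j ∧ t i j ≤ n := by
      rintro t ⟨⟨hbd, _, hrow, _⟩, hfirst⟩ i j hj
      have h0 : 0 < τ i := lt_of_le_of_lt (Nat.zero_le j) hj
      have h1 := hfirst i h0
      have h2 := hrow i 0 j (Nat.zero_le j) hj
      have h3 := (hbd i j hj).2
      omega
    constructor
    · -- MapsTo
      rintro t ht
      obtain ⟨⟨hbd, hout, hrow, hcol⟩, hfirst⟩ := ht
      have hk' := hkey t ⟨⟨hbd, hout, hrow, hcol⟩, hfirst⟩
      refine ⟨⟨?_, ?_, ?_, ?_⟩, ?_⟩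
      · intro i j hj
        simp only [if_pos hj]
        have := hk' i j hj
        omega
      · intro i j hj
        simp only [if_neg hj]
      · intro i j1 j2 h12 h2
        simp only [if_pos (lt_of_le_of_lt h12 h2), if_pos h2]
        exact Nat.sub_le_sub_right (hrow i j1 j2 h12 h2) _
      · intro i1 i2 j h12 hj2
        have hj1 : j < τ i1 := lt_of_lt_of_le hj2 (hτ (le_of_lt h12))
        simp only [if_pos hj1, if_pos hj2]
        have ha := hk' i1 j hj1
        have hb := hcol i1 i2 j h12 hj2
        omega
      · intro i hi
        simp only [if_pos hi]
        have := hfirst i hi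
        omega
    constructor
    · -- InjOn
      intro t1 ht1 t2 ht2 heq
      have hk1 := hkey t1 ht1
      have hk2 := hkey t2 ht2
      funext i j
      have h := congrFun (congrFun heq i) j
      by_cases hj : j < τ i
      · simp only [if_pos hj] at h
        have h1 := hk1 i j hj
        have h2 := hk2 i j hj
        omega
      · rw [ht1.1.2.1 i j hj, ht2.1.2.1 i j hj]
    · -- SurjOn
      rintro t' ⟨⟨hbd', hout', hrow', hcol'⟩, hfirst'⟩
      refine ⟨fun i j => if j < τ i then t' i j + (n - 2 * k) else 0, ⟨⟨?_, ?_, ?_, ?_⟩, ?_⟩, ?_⟩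
      · intro i j hj
        simp only [if_pos hj]
        have := hbd' i j hj
        omega
      · intro i j hj
        simp only [if_neg hj]
      · intro i j1 j2 h12 h2
        simp only [if_pos (lt_of_le_of_lt h12 h2), if_pos h2]
        have := hrow' i j1 j2 h12 h2
        omega
      · intro i1 i2 j h12 hj2
        have hj1 : j < τ i1 := lt_of_lt_of_le hj2 (hτ (le_of_lt h12))
        simp only [if_pos hj1, if_pos hj2]
        have := hcol' i1 i2 j h12 hj2
        omega
      · intro i hi
        simp only [if_pos hi]
        have := hfirst' i hi
        omega
      · funext i j
        by_cases hj : j < τ i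
        · simp only [if_pos hj]
          omega
        · simp only [if_neg hj]
          exact (hout' i j hj).symm
  refine ⟨hset, hbij, ?_⟩
  rw [← hbij.image_eq, Set.ncard_image_of_injOn hbij.injOn]


end
end

section
/- Let V = ℂ^k with the standard symmetric bilinear form b(u,v) = Σ_ℓ u_ℓ v_ℓ, and let integers a_1 < … < a_s < d_1 < … < d_t, b_1 < … < b_r < d_1, and c_1 < … < c_r in {1,…,n} with b_i ≤ c_i for every i, r ≥ s, and r + t = k + 1 (an O_k-split, with m := s + t). For equal-size subsets S = {i_1<…<i_a} ⊆ {1,…,t} and S' = {j_1<…<j_a} ⊆ {1,…,r}, define the exchanged index lists d^{S,S'} and b^{S,S'} by d^{S,S'}_{i_ℓ} := b_{j_ℓ} and b^{S,S'}_{j_ℓ} := d_{i_ℓ} for ℓ = 1,…,a, other entries unchanged. Then for every (v_1,…,v_n) ∈ V^n: Σ_{a=0}^{min(r,t)} (−1)^a Σ_{#S=#S'=a} det[ (b(v_{b^{S,S'}_i}, v_{c_j}))_{i,j=1}^r ] · ( v_{a_1} ∧ … ∧ v_{a_s} ∧ v_{d^{S,S'}_1} ∧ … ∧ v_{d^{S,S'}_t}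 ) = 0 in ⋀^m ℂ^k. (The orthogonal Garnir relation, Lemma of Section 7.4; its leading monomial is the monomial of the O_k-split.) -/
attribute [local instance] Classical.propDecidable
set_option synthInstance.maxHeartbeats 1000000
set_option maxHeartbeats 1000000

/-!
STATEMENT 15: (Orthogonal Garnir relation.)  Let V = ℂ^k with the standard symmetric bilinear
form b(u,v) = Σ_ℓ u_ℓ v_ℓ, and let a_1<…<a_s<d_1<…<d_t, b_1<…<b_r<d_1, c_1<…<c_r in {1,…,n}
with b_i ≤ c_i, r ≥ s and r + t = k + 1 (an O_k-split, m := s+t).  Then for every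
(v_1,…,v_n) ∈ V^n the alternating sum over all exchanges of equal-size subsets
S ⊆ {1,…,t}, S' ⊆ {1,…,r} of det[(b(v_{b^{S,S'}_i}, v_{c_j}))_{i,j}] ·
(v_{a_1} ∧ … ∧ v_{a_s} ∧ v_{d^{S,S'}_1} ∧ … ∧ v_{d^{S,S'}_t}) vanishes in ⋀^m ℂ^k.
Subsets of size a are encoded by strictly monotone maps σ : Fin a → Fin t, σ' : Fin a → Fin r;
vectors are indexed by 1-based naturals via v : ℕ → (Fin k → ℂ).
-/

noncomputable section

/-- The exchanged list `d^{S,S'}` of indices. -/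
def exchL {r t a : ℕ} (d : Fin t → ℕ) (b : Fin r → ℕ)
    (σ : Fin a → Fin t) (σ' : Fin a → Fin r) : Fin t → ℕ :=
  fun i => if h : ∃ ℓ, σ ℓ = i then b (σ' h.choose) else d i

/-- The exchanged list `b^{S,S'}` of indices. -/
def exchR {r t a : ℕ} (d : Fin t → ℕ) (b : Fin r → ℕ)
    (σ : Fin a → Fin t) (σ' : Fin a → Fin r) : Fin r → ℕ :=
  fun j => if h : ∃ ℓ, σ' ℓ = j then d (σ h.choose) else b j

/-- The standard symmetric bilinear form `b(u,v) = Σ_ℓ u_ℓ v_ℓ` on `ℂ^k`. -/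
def dotP {k : ℕ} (x y : Fin k → ℂ) : ℂ := ∑ ℓ, x ℓ * y ℓ

/-- The wedge `v_1 ∧ … ∧ v_m`, as an element of the `m`-th exterior power `⋀[ℂ]^m ℂ^k`. -/
def wedge (k m : ℕ) (v : Fin m → (Fin k → ℂ)) : ⋀[ℂ]^m (Fin k → ℂ) :=
  ⟨ExteriorAlgebra.ιMulti ℂ m v,
    ExteriorAlgebra.ιMulti_range ℂ m (Set.mem_range_self v)⟩


open Equiv Function

namespace OG


variable {r t : ℕ}

/-- The exchange permutation: product of the transpositions `(inl (σ' ℓ), inr (σ ℓ))`. -/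
def exchPerm {a : ℕ} (σ : Fin a → Fin t) (σ' : Fin a → Fin r) : Perm (Fin r ⊕ Fin t) :=
  (List.ofFn (fun ℓ => Equiv.swap (.inl (σ' ℓ)) (.inr (σ ℓ)))).prod

lemma exchPerm_succ {a : ℕ} (σ : Fin (a+1) → Fin t) (σ' : Fin (a+1) → Fin r) :
    exchPerm σ σ' = Equiv.swap (.inl (σ' 0)) (.inr (σ 0)) * exchPerm (σ ∘ Fin.succ) (σ' ∘ Fin.succ) := by
  rw [exchPerm, List.ofFn_succ, List.prod_cons]; rfl

lemma exchPerm_inl_of_notMem {a : ℕ} {σ : Fin a → Fin t} {σ' : Fin a → Fin r}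
    {j : Fin r} (hj : ∀ ℓ, σ' ℓ ≠ j) : exchPerm σ σ' (.inl j) = .inl j := by
  induction a with
  | zero => rfl
  | succ a ih =>
    rw [exchPerm_succ]
    simp only [Perm.mul_apply]
    have := ih (σ := σ ∘ Fin.succ) (σ' := σ' ∘ Fin.succ) (fun ℓ => hj ℓ.succ)
    rw [this]
    exact Equiv.swap_apply_of_ne_of_ne (by simpa using (hj 0).symm) (by simp)

lemma exchPerm_inr_of_notMem {a : ℕ} {σ : Fin a → Fin t} {σ' : Fin a → Fin r}
    {i : Fin t} (hi : ∀ ℓ, σ ℓ ≠ i) : exchPerm σ σ' (.inr i) = .inr i := by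
  induction a with
  | zero => rfl
  | succ a ih =>
    rw [exchPerm_succ]
    simp only [Perm.mul_apply]
    have := ih (σ := σ ∘ Fin.succ) (σ' := σ' ∘ Fin.succ) (fun ℓ => hi ℓ.succ)
    rw [this]
    exact Equiv.swap_apply_of_ne_of_ne (by simp) (by simpa using (hi 0).symm)

lemma exchPerm_inl_apply {a : ℕ} {σ : Fin a → Fin t} {σ' : Fin a → Fin r}
    (hσ : Injective σ) (hσ' : Injective σ') (ℓ : Fin a) :
    exchPerm σ σ' (.inl (σ' ℓ)) = .inr (σ ℓ) := by
  induction a with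
  | zero => exact absurd ℓ.2 (by omega)
  | succ a ih =>
    rw [exchPerm_succ]
    simp only [Perm.mul_apply]
    rcases Fin.eq_zero_or_eq_succ ℓ with h | ⟨m, rfl⟩
    · subst h
      have := exchPerm_inl_of_notMem (σ := σ ∘ Fin.succ) (σ' := σ' ∘ Fin.succ)
        (j := σ' 0) (fun ℓ' h => (Fin.succ_ne_zero ℓ') (hσ' h))
      rw [this]
      exact Equiv.swap_apply_left _ _
    · have := ih (σ := σ ∘ Fin.succ) (σ' := σ' ∘ Fin.succ)
        (hσ.comp (Fin.succ_injective a)) (hσ'.comp (Fin.succ_injective a)) m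
      rw [Function.comp_apply, Function.comp_apply] at this
      rw [this]
      exact Equiv.swap_apply_of_ne_of_ne (by simp)
        (by simpa using fun h => (Fin.succ_ne_zero m) (hσ h))

lemma exchPerm_inr_apply {a : ℕ} {σ : Fin a → Fin t} {σ' : Fin a → Fin r}
    (hσ : Injective σ) (hσ' : Injective σ') (ℓ : Fin a) :
    exchPerm σ σ' (.inr (σ ℓ)) = .inl (σ' ℓ) := by
  induction a with
  | zero => exact absurd ℓ.2 (by omega)
  | succ a ih =>
    rw [exchPerm_succ]
    simp only [Perm.mul_apply]
    rcases Fin.eq_zero_or_eq_succ ℓ with h | ⟨m, rfl⟩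
    · subst h
      have := exchPerm_inr_of_notMem (σ := σ ∘ Fin.succ) (σ' := σ' ∘ Fin.succ)
        (i := σ 0) (fun ℓ' h => (Fin.succ_ne_zero ℓ') (hσ h))
      rw [this]
      exact Equiv.swap_apply_right _ _
    · have := ih (σ := σ ∘ Fin.succ) (σ' := σ' ∘ Fin.succ)
        (hσ.comp (Fin.succ_injective a)) (hσ'.comp (Fin.succ_injective a)) m
      rw [Function.comp_apply, Function.comp_apply] at this
      rw [this]
      exact Equiv.swap_apply_of_ne_of_ne
        (by simpa using fun h => (Fin.succ_ne_zero m) (hσ' h)) (by simp)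

lemma exchPerm_inl {a : ℕ} {σ : Fin a → Fin t} {σ' : Fin a → Fin r}
    (hσ : Injective σ) (hσ' : Injective σ') (j : Fin r) :
    exchPerm σ σ' (.inl j) =
      if h : ∃ ℓ, σ' ℓ = j then .inr (σ h.choose) else .inl j := by
  split
  · next h =>
      have hc : σ' h.choose = j := h.choose_spec
      calc exchPerm σ σ' (.inl j) = exchPerm σ σ' (.inl (σ' h.choose)) := by rw [hc]
        _ = .inr (σ h.choose) := exchPerm_inl_apply hσ hσ' _
  · next h => exact exchPerm_inl_of_notMem (by push_neg at h; exact h)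

lemma exchPerm_inr {a : ℕ} {σ : Fin a → Fin t} {σ' : Fin a → Fin r}
    (hσ : Injective σ) (hσ' : Injective σ') (i : Fin t) :
    exchPerm σ σ' (.inr i) =
      if h : ∃ ℓ, σ ℓ = i then .inl (σ' h.choose) else .inr i := by
  split
  · next h =>
      have hc : σ h.choose = i := h.choose_spec
      calc exchPerm σ σ' (.inr i) = exchPerm σ σ' (.inr (σ h.choose)) := by rw [hc]
        _ = .inl (σ' h.choose) := exchPerm_inr_apply hσ hσ' _
  · next h => exact exchPerm_inr_of_notMem (by push_neg at h; exact h)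

lemma sign_exchPerm {a : ℕ} (σ : Fin a → Fin t) (σ' : Fin a → Fin r) :
    Perm.sign (exchPerm σ σ') = (-1 : ℤˣ) ^ a := by
  rw [exchPerm, Perm.sign_prod_list_swap, List.length_ofFn]
  intro g hg
  simp only [List.mem_ofFn, Set.mem_range] at hg
  obtain ⟨ℓ, rfl⟩ := hg
  exact ⟨_, _, by simp, rfl⟩


section Charact

variable {r t : ℕ} {a : ℕ} {σ : Fin a → Fin t} {σ' : Fin a → Fin r}

lemma exch_inl_inr (hσ : Injective σ) (hσ' : Injective σ') (i : Fin t) :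
    (∃ j₀, exchPerm σ σ' (.inl j₀) = .inr i) ↔ ∃ ℓ, σ ℓ = i := by
  constructor
  · rintro ⟨j₀, hj₀⟩
    rw [exchPerm_inl hσ hσ'] at hj₀
    split at hj₀
    · next h => exact ⟨h.choose, by injection hj₀⟩
    · exact absurd hj₀ (by simp)
  · rintro ⟨ℓ, rfl⟩
    exact ⟨σ' ℓ, exchPerm_inl_apply hσ hσ' ℓ⟩

lemma exch_inl_inl (hσ : Injective σ) (hσ' : Injective σ') (j : Fin r) :
    (∃ j₀, exchPerm σ σ' (.inl j₀) = .inl j) ↔ ¬∃ ℓ, σ' ℓ = j := by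
  constructor
  · rintro ⟨j₀, hj₀⟩
    rw [exchPerm_inl hσ hσ'] at hj₀
    split at hj₀
    · exact absurd hj₀ (by simp)
    · next h => injection hj₀ with hh; exact hh ▸ h
  · intro h
    exact ⟨j, exchPerm_inl_of_notMem (by push_neg at h; exact h)⟩

lemma exch_inr_inl (hσ : Injective σ) (hσ' : Injective σ') (j : Fin r) :
    (∃ i₀, exchPerm σ σ' (.inr i₀) = .inl j) ↔ ∃ ℓ, σ' ℓ = j := by
  constructor
  · rintro ⟨i₀, hi₀⟩
    rw [exchPerm_inr hσ hσ'] at hi₀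
    split at hi₀
    · next h => exact ⟨h.choose, by injection hi₀⟩
    · exact absurd hi₀ (by simp)
  · rintro ⟨ℓ, rfl⟩
    exact ⟨σ ℓ, exchPerm_inr_apply hσ hσ' ℓ⟩

end Charact

lemma update_append {α : Type*} {s t : ℕ} (p : Fin s → α) (q : Fin t → α) (i : Fin t) (x : α) :
    Fin.append p (Function.update q i x) = Function.update (Fin.append p q) (Fin.natAdd s i) x := by
  ext j
  induction j using Fin.addCases with
  | left j =>
    rw [Fin.append_left, Function.update_apply]
    rw [if_neg (by simp [Fin.ext_iff]; omega), Fin.append_left]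
  | right j =>
    rw [Fin.append_right, Function.update_apply, Function.update_apply,
      Fin.append_right]
    congr 1
    simp [Fin.ext_iff]

/-- The wedge with a fixed prefix, as an alternating map into the exterior algebra. -/
def gAlt (k s t : ℕ) (va : Fin s → Fin k → ℂ) :
    (Fin k → ℂ) [⋀^Fin t]→ₗ[ℂ] ExteriorAlgebra ℂ (Fin k → ℂ) where
  toFun u := ExteriorAlgebra.ιMulti ℂ (s + t) (Fin.append va u)
  map_update_add' := by
    intro dec u i x y
    have hdec : dec = instDecidableEqFin t := Subsingleton.elim _ _
    subst hdec
    simp only [update_append]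
    exact (ExteriorAlgebra.ιMulti ℂ (s + t)).map_update_add _ _ _ _
  map_update_smul' := by
    intro dec u i cc x
    have hdec : dec = instDecidableEqFin t := Subsingleton.elim _ _
    subst hdec
    simp only [update_append]
    exact (ExteriorAlgebra.ιMulti ℂ (s + t)).map_update_smul _ _ _ _
  map_eq_zero_of_eq' := by
    intro u i j hu hij
    refine (ExteriorAlgebra.ιMulti ℂ (s + t)).map_eq_zero_of_eq _
      (i := Fin.natAdd s i) (j := Fin.natAdd s j) ?_ (by simpa [Fin.ext_iff] using hij)
    rw [Fin.append_right, Fin.append_right, hu]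

/-- The linear map `x ↦ dotP x y`. -/
def dotl {k : ℕ} (y : Fin k → ℂ) : (Fin k → ℂ) →ₗ[ℂ] ℂ where
  toFun x := dotP x y
  map_add' x₁ x₂ := by simp [dotP, add_mul, Finset.sum_add_distrib]
  map_smul' cc x := by simp [dotP, Finset.mul_sum, mul_assoc]

/-- The determinant of the dot-product matrix, as an alternating map in the rows. -/
def fAlt (k r : ℕ) (w : Fin r → Fin k → ℂ) : (Fin k → ℂ) [⋀^Fin r]→ₗ[ℂ] ℂ :=
  (Matrix.detRowAlternating (n := Fin r) (R := ℂ)).compLinearMap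
    (LinearMap.pi fun j => dotl (w j))

lemma fAlt_apply (k r : ℕ) (w : Fin r → Fin k → ℂ) (u : Fin r → Fin k → ℂ) :
    fAlt k r w u = Matrix.det (Matrix.of fun i j : Fin r => dotP (u i) (w j)) := rfl

end OG

/-- **The orthogonal Garnir relation** (Lemma of Section 7.4). -/
theorem orthogonal_garnir_relation (n k r s t : ℕ) (hrs : s ≤ r) (hrt : r + t = k + 1)
    (a : Fin s → ℕ) (d : Fin t → ℕ) (b : Fin r → ℕ) (c : Fin r → ℕ)
    (ha : StrictMono a) (hd : StrictMono d) (hb : StrictMono b) (hc : StrictMono c)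
    (haN : ∀ i, 1 ≤ a i ∧ a i ≤ n) (hdN : ∀ i, 1 ≤ d i ∧ d i ≤ n)
    (hbN : ∀ i, 1 ≤ b i ∧ b i ≤ n) (hcN : ∀ i, 1 ≤ c i ∧ c i ≤ n)
    (had : ∀ i j, a i < d j) (hbd : ∀ i j, b i < d j) (hbc : ∀ i, b i ≤ c i)
    (v : ℕ → (Fin k → ℂ)) :
    ∑ x ∈ Finset.range (min r t + 1), (-1 : ℤ) ^ x •
      ∑ σ ∈ Finset.univ.filter (fun σ : Fin x → Fin t => StrictMono σ),
        ∑ σ' ∈ Finset.univ.filter (fun σ' : Fin x → Fin r => StrictMono σ'),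
          Matrix.det (Matrix.of fun i j : Fin r =>
              dotP (v (exchR d b σ σ' i)) (v (c j))) •
            wedge k (s + t)
              (Fin.append (fun i => v (a i)) (fun i => v (exchL d b σ σ' i))) = 0 := by
  classical
  set va : Fin s → (Fin k → ℂ) := fun i => v (a i) with hva
  set f : (Fin k → ℂ) [⋀^Fin r]→ₗ[ℂ] ℂ := OG.fAlt k r (fun j => v (c j)) with hf
  set g : (Fin k → ℂ) [⋀^Fin t]→ₗ[ℂ] ExteriorAlgebra ℂ (Fin k → ℂ) :=
    OG.gAlt k s t va with hg
  set A : (Fin k → ℂ) [⋀^Fin r ⊕ Fin t]→ₗ[ℂ] ExteriorAlgebra ℂ (Fin k → ℂ) :=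
    (TensorProduct.lid ℂ (ExteriorAlgebra ℂ (Fin k → ℂ))).toLinearMap.compAlternatingMap
      (f.domCoprod g) with hA
  set xx : Fin r ⊕ Fin t → (Fin k → ℂ) :=
    Sum.elim (fun j => v (b j)) (fun i => v (d i)) with hxx
  -- Reduce to the exterior algebra via injectivity of the submodule inclusion
  have hval := Submodule.injective_subtype (⋀[ℂ]^(s+t) (Fin k → ℂ))
  apply hval
  rw [map_sum, map_zero]
  have hwedge : ∀ (u : Fin (s+t) → (Fin k → ℂ)),
      (⋀[ℂ]^(s+t) (Fin k → ℂ)).subtype (wedge k (s+t) u) = ExteriorAlgebra.ιMulti ℂ (s+t) u :=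
    fun u => rfl
  simp only [map_zsmul, map_sum, map_smul, hwedge]
  -- Step 1 : A xx = 0 by linear dependence
  have hdep : ¬ LinearIndependent ℂ xx := by
    intro h
    have h1 := h.fintype_card_le_finrank
    rw [Module.finrank_fin_fun] at h1
    simp only [Fintype.card_sum, Fintype.card_fin] at h1
    omega
  have hA0 : A xx = 0 := A.map_linearDependent xx hdep
  -- Step 2 : A xx as a sum over the quotient
  have hAq : A xx = ∑ q : Equiv.Perm.ModSumCongr (Fin r) (Fin t),
      (TensorProduct.lid ℂ (ExteriorAlgebra ℂ (Fin k → ℂ))).toLinearMap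
        (AlternatingMap.domCoprod.summand f g q xx) := by
    rw [hA, LinearMap.compAlternatingMap_apply, AlternatingMap.domCoprod_apply,
      MultilinearMap.sum_apply, map_sum]
  -- Step 3 : identify the exchange sum with the quotient sum
  rw [← hA0, hAq]
  -- flatten the triple sum into a sigma-indexed sum
  have hflat : ∑ x ∈ Finset.range (min r t + 1), (-1 : ℤ) ^ x •
      ∑ σ ∈ Finset.univ.filter (fun σ : Fin x → Fin t => StrictMono σ),
        ∑ σ' ∈ Finset.univ.filter (fun σ' : Fin x → Fin r => StrictMono σ'),
          Matrix.det (Matrix.of fun i j : Fin r =>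
              dotP (v (exchR d b σ σ' i)) (v (c j))) •
            ExteriorAlgebra.ιMulti ℂ (s + t)
              (Fin.append va (fun i => v (exchL d b σ σ' i)))
      = ∑ E ∈ (Finset.range (min r t + 1)).sigma
          (fun x => (Finset.univ.filter (fun σ : Fin x → Fin t => StrictMono σ)) ×ˢ
            (Finset.univ.filter (fun σ' : Fin x → Fin r => StrictMono σ'))),
          (-1 : ℤ) ^ E.1 •
            (Matrix.det (Matrix.of fun i j : Fin r =>
              dotP (v (exchR d b E.2.1 E.2.2 i)) (v (c j))) •
            ExteriorAlgebra.ιMulti ℂ (s + t)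
              (Fin.append va (fun i => v (exchL d b E.2.1 E.2.2 i)))) := by
    rw [Finset.sum_sigma]
    refine Finset.sum_congr rfl fun x _ => ?_
    rw [Finset.sum_product, Finset.smul_sum]
    exact Finset.sum_congr rfl fun σ _ => Finset.smul_sum
  rw [hflat]
  -- the bijection between exchange data and the quotient
  refine Finset.sum_bij
    (fun E _ => Quotient.mk'' (OG.exchPerm E.2.1 E.2.2)) (fun E hE => Finset.mem_univ _)
    ?_ ?_ ?_
  · -- injectivity
    rintro ⟨x₁, σ₁, σ₁'⟩ h₁ ⟨x₂, σ₂, σ₂'⟩ h₂ hq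
    simp only [Finset.mem_sigma, Finset.mem_product, Finset.mem_filter, Finset.mem_range] at h₁ h₂
    obtain ⟨hx₁, ⟨-, hσ₁⟩, -, hσ₁'⟩ := h₁
    obtain ⟨hx₂, ⟨-, hσ₂⟩, -, hσ₂'⟩ := h₂
    rw [Quotient.eq''] at hq
    rw [QuotientGroup.leftRel_apply] at hq
    obtain ⟨⟨τ₁, τ₂⟩, hτ⟩ := hq
    have hP : ∀ p, OG.exchPerm σ₂ σ₂' p =
        OG.exchPerm σ₁ σ₁' (Equiv.sumCongr τ₁ τ₂ p) := by
      intro p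
      have h2 : OG.exchPerm σ₁ σ₁' * Equiv.Perm.sumCongrHom _ _ (τ₁, τ₂) =
          OG.exchPerm σ₂ σ₂' := by
        rw [hτ]; group
      rw [← h2]; rfl
    have him : ∀ i : Fin t, (∃ ℓ, σ₂ ℓ = i) ↔ (∃ ℓ, σ₁ ℓ = i) := by
      intro i
      rw [← OG.exch_inl_inr hσ₂.injective hσ₂'.injective i,
          ← OG.exch_inl_inr hσ₁.injective hσ₁'.injective i]
      constructor
      · rintro ⟨j₀, hj⟩
        refine ⟨τ₁ j₀, ?_⟩
        rw [hP (Sum.inl j₀)] at hj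
        simpa using hj
      · rintro ⟨j₀, hj⟩
        refine ⟨τ₁.symm j₀, ?_⟩
        rw [hP (Sum.inl (τ₁.symm j₀))]
        simpa using hj
    have him' : ∀ j : Fin r, (∃ ℓ, σ₂' ℓ = j) ↔ (∃ ℓ, σ₁' ℓ = j) := by
      intro j
      rw [← OG.exch_inr_inl hσ₂.injective hσ₂'.injective j,
          ← OG.exch_inr_inl hσ₁.injective hσ₁'.injective j]
      constructor
      · rintro ⟨i₀, hi⟩
        refine ⟨τ₂ i₀, ?_⟩
        rw [hP (Sum.inr i₀)] at hi
        simpa using hi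
      · rintro ⟨i₀, hi⟩
        refine ⟨τ₂.symm i₀, ?_⟩
        rw [hP (Sum.inr (τ₂.symm i₀))]
        simpa using hi
    have him2 : (Finset.univ.image σ₁) = (Finset.univ.image σ₂) := by
      ext i
      simp only [Finset.mem_image, Finset.mem_univ, true_and]
      exact (him i).symm
    have him2' : (Finset.univ.image σ₁') = (Finset.univ.image σ₂') := by
      ext j
      simp only [Finset.mem_image, Finset.mem_univ, true_and]
      exact (him' j).symm
    have hx : x₁ = x₂ := by
      have hcc := congrArg Finset.card him2
      rwa [Finset.card_image_of_injective _ hσ₁.injective,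
        Finset.card_image_of_injective _ hσ₂.injective, Finset.card_univ, Finset.card_univ,
        Fintype.card_fin, Fintype.card_fin] at hcc
    subst hx
    have hcard : (Finset.univ.image σ₂).card = x₁ := by
      rw [Finset.card_image_of_injective _ hσ₂.injective, Finset.card_univ, Fintype.card_fin]
    have hcard' : (Finset.univ.image σ₂').card = x₁ := by
      rw [Finset.card_image_of_injective _ hσ₂'.injective, Finset.card_univ, Fintype.card_fin]
    have e1 := Finset.orderEmbOfFin_unique hcard
      (f := σ₁) (fun ℓ => him2 ▸ Finset.mem_image_of_mem _ (Finset.mem_univ ℓ)) hσ₁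
    have e2 := Finset.orderEmbOfFin_unique hcard
      (f := σ₂) (fun ℓ => Finset.mem_image_of_mem _ (Finset.mem_univ ℓ)) hσ₂
    have e1' := Finset.orderEmbOfFin_unique hcard'
      (f := σ₁') (fun ℓ => him2' ▸ Finset.mem_image_of_mem _ (Finset.mem_univ ℓ)) hσ₁'
    have e2' := Finset.orderEmbOfFin_unique hcard'
      (f := σ₂') (fun ℓ => Finset.mem_image_of_mem _ (Finset.mem_univ ℓ)) hσ₂'
    have hσe : σ₁ = σ₂ := e1.trans e2.symm
    have hσ'e : σ₁' = σ₂' := e1'.trans e2'.symm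
    rw [hσe, hσ'e]
  · -- surjectivity
    intro q _
    induction q using Quotient.inductionOn' with
    | h π =>
    set Sfin : Finset (Fin t) :=
      Finset.univ.filter (fun i => ∃ j₀ : Fin r, π (Sum.inl j₀) = Sum.inr i) with hSfin
    set S'fin : Finset (Fin r) :=
      Finset.univ.filter (fun j => ¬ ∃ j₀ : Fin r, π (Sum.inl j₀) = Sum.inl j) with hS'fin
    set Tl : Finset (Fin r) :=
      Finset.univ.filter (fun j => ∃ j₀ : Fin r, π (Sum.inl j₀) = Sum.inl j) with hTl
    have hinj : Function.Injective (fun j₀ : Fin r => π (Sum.inl j₀)) :=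
      fun p q h => Sum.inl_injective (π.injective h)
    have himg : (Finset.univ.image (fun j₀ : Fin r => π (Sum.inl j₀)))
        = Tl.image Sum.inl ∪ Sfin.image Sum.inr := by
      ext p
      simp only [hTl, hSfin, Finset.mem_image, Finset.mem_union, Finset.mem_filter,
        Finset.mem_univ, true_and]
      cases p with
      | inl j =>
        constructor
        · rintro ⟨j₀, hj₀⟩
          exact Or.inl ⟨j, ⟨j₀, hj₀⟩, rfl⟩
        · rintro (⟨j', hj', heq⟩ | ⟨i', hi', heq⟩)
          · obtain rfl := Sum.inl_injective heq
            exact hj'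
          · exact absurd heq (by simp)
      | inr i =>
        constructor
        · rintro ⟨j₀, hj₀⟩
          exact Or.inr ⟨i, ⟨j₀, hj₀⟩, rfl⟩
        · rintro (⟨j', hj', heq⟩ | ⟨i', hi', heq⟩)
          · exact absurd heq (by simp)
          · obtain rfl := Sum.inr_injective heq
            exact hi'
    have hcards : Tl.card + Sfin.card = r := by
      have h1 : (Tl.image Sum.inl ∪ Sfin.image Sum.inr).card = r := by
        rw [← himg, Finset.card_image_of_injective _ hinj, Finset.card_univ, Fintype.card_fin]
      rwa [Finset.card_union_of_disjoint (by
          rw [Finset.disjoint_left]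
          rintro p hp hp'
          obtain ⟨j', -, rfl⟩ := Finset.mem_image.mp hp
          obtain ⟨i', -, hci⟩ := Finset.mem_image.mp hp'
          exact absurd hci (by simp)),
        Finset.card_image_of_injective _ Sum.inl_injective,
        Finset.card_image_of_injective _ Sum.inr_injective] at h1
    have hS'card : S'fin.card = Sfin.card := by
      have h2 : S'fin = Finset.univ \ Tl := by
        rw [hS'fin, hTl, Finset.filter_not]
      have h3 : Tl.card ≤ r := by omega
      rw [h2, Finset.card_sdiff_of_subset (Finset.subset_univ _), Finset.card_univ, Fintype.card_fin]
      omega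
    have hat : Sfin.card ≤ t := le_trans (Finset.card_filter_le _ _) (by simp)
    have har : Sfin.card ≤ r := by
      rw [← hS'card]
      exact le_trans (Finset.card_filter_le _ _) (by simp)
    set σ : Fin Sfin.card → Fin t := fun ℓ => Sfin.orderEmbOfFin rfl ℓ with hσdef
    set σ' : Fin Sfin.card → Fin r := fun ℓ => S'fin.orderEmbOfFin hS'card ℓ with hσ'def
    have hσ : StrictMono σ := (Sfin.orderEmbOfFin rfl).strictMono
    have hσ' : StrictMono σ' := (S'fin.orderEmbOfFin hS'card).strictMono
    refine ⟨⟨Sfin.card, σ, σ'⟩, ?_, ?_⟩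
    · simp only [Finset.mem_sigma, Finset.mem_range, Finset.mem_product, Finset.mem_filter,
        Finset.mem_univ, true_and]
      exact ⟨by omega, hσ, hσ'⟩
    · rw [Quotient.eq'', QuotientGroup.leftRel_apply]
      apply Equiv.Perm.mem_sumCongrHom_range_of_perm_mapsTo_inl
      rintro p ⟨j, rfl⟩
      rw [Set.mem_range]
      rw [Equiv.Perm.mul_apply]
      cases hπ : π (Sum.inl j) with
      | inl j' =>
        have hj' : ∀ ℓ, σ' ℓ ≠ j' := by
          intro ℓ hℓ
          have hmem : j' ∈ S'fin := hℓ ▸ Finset.orderEmbOfFin_mem _ _ _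
          rw [hS'fin, Finset.mem_filter] at hmem
          exact hmem.2 ⟨j, hπ⟩
        refine ⟨j', ?_⟩
        rw [Equiv.Perm.eq_inv_iff_eq, OG.exchPerm_inl_of_notMem hj']
      | inr i' =>
        have hmem : i' ∈ Sfin := by
          rw [hSfin, Finset.mem_filter]
          exact ⟨Finset.mem_univ _, ⟨j, hπ⟩⟩
        obtain ⟨ℓ, hℓ⟩ : ∃ ℓ, σ ℓ = i' := by
          have h5 : i' ∈ Set.range σ := by
            rw [hσdef]
            show i' ∈ Set.range ⇑(Sfin.orderEmbOfFin rfl)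
            rw [Finset.range_orderEmbOfFin]
            exact hmem
          exact h5
        refine ⟨σ' ℓ, ?_⟩
        rw [Equiv.Perm.eq_inv_iff_eq, OG.exchPerm_inl_apply hσ.injective hσ'.injective, hℓ]
  · -- values agree
    rintro ⟨x₀, σ, σ'⟩ hE
    simp only [Finset.mem_sigma, Finset.mem_product, Finset.mem_filter, Finset.mem_range] at hE
    obtain ⟨hx₀, ⟨-, hσ⟩, -, hσ'⟩ := hE
    have hσi := hσ.injective
    have hσ'i := hσ'.injective
    rw [AlternatingMap.domCoprod.summand_mk'', MultilinearMap.smul_apply,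
      MultilinearMap.domDomCongr_apply, OG.sign_exchPerm, Units.smul_def, map_zsmul]
    have hdc : (MultilinearMap.domCoprod (f : MultilinearMap ℂ (fun _ : Fin r => (Fin k → ℂ)) ℂ)
          (g : MultilinearMap ℂ (fun _ : Fin t => (Fin k → ℂ)) (ExteriorAlgebra ℂ (Fin k → ℂ))))
          (fun i => xx (OG.exchPerm σ σ' i)) =
        (f fun j => xx (OG.exchPerm σ σ' (Sum.inl j))) ⊗ₜ[ℂ]
          (g fun i => xx (OG.exchPerm σ σ' (Sum.inr i))) := rfl
    rw [hdc]
    simp only [LinearEquiv.coe_coe, TensorProduct.lid_tmul]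
    have harg1 : (fun j => xx (OG.exchPerm σ σ' (Sum.inl j))) =
        fun j => v (exchR d b σ σ' j) := by
      funext j
      rw [OG.exchPerm_inl hσi hσ'i, exchR]
      by_cases h : ∃ ℓ, σ' ℓ = j
      · rw [dif_pos h, dif_pos h]; rfl
      · rw [dif_neg h, dif_neg h]; rfl
    have harg2 : (fun i => xx (OG.exchPerm σ σ' (Sum.inr i))) =
        fun i => v (exchL d b σ σ' i) := by
      funext i
      rw [OG.exchPerm_inr hσi hσ'i, exchL]
      by_cases h : ∃ ℓ, σ ℓ = i
      · rw [dif_pos h, dif_pos h]; rfl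
      · rw [dif_neg h, dif_neg h]; rfl
    rw [harg1, harg2]
    have hfval : f (fun j => v (exchR d b σ σ' j)) =
        Matrix.det (Matrix.of fun i j : Fin r => dotP (v (exchR d b σ σ' i)) (v (c j))) := rfl
    have hgval : g (fun i => v (exchL d b σ σ' i)) =
        ExteriorAlgebra.ιMulti ℂ (s + t) (Fin.append va (fun i => v (exchL d b σ σ' i))) := rfl
    rw [hfval, hgval]
    simp only [Units.val_pow_eq_pow_val, Units.val_neg, Units.val_one]

end
end

section
/- Let 0 ≤ m ≤ k ≤ n, let T ⊆ {1,…,n} with #T = m, and let e : {(i,j) : 1 ≤ i ≤ j ≤ n} → ℕ be finitely supported. Call e T-nonstandard if there exists an O_k-split with {a_1,…,a_s, d_1,…,d_t} = T and e(b_i,c_i) ≥ 1 for every i = 1,…,r; otherwise call e T-standard. Then e is T-standard if and only if supp(e) ⊆ 𝐅 for some family 𝐅 with 𝐅 ⇉ T. (Lemma 7.14 of the paper.) -/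
attribute [local instance] Classical.propDecidable

/-!
STATEMENT 18: (Lemma 7.14.)  Let 0 ≤ m ≤ k ≤ n, T ⊆ {1,…,n} with #T = m, and
e : {(i,j) : 1 ≤ i ≤ j ≤ n} → ℕ finitely supported.  Call e T-nonstandard if there is an
O_k-split (a_1<…<a_s<d_1<…<d_t, b_1<…<b_r<d_1, c_1<…<c_r, b_i ≤ c_i, r ≥ s, s+t = m,
r+t = k+1) with {a_1,…,a_s,d_1,…,d_t} = T and e(b_i,c_i) ≥ 1 for all i.  Then e is T-standard
iff supp(e) ⊆ 𝐅 for some family 𝐅 ⇉ T.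
-/

noncomputable section

/-- A unit lattice step to the north or to the east. -/
def StepO (a b : ℕ × ℕ) : Prop := (a.1 = b.1 + 1 ∧ a.2 = b.2) ∨ b = (a.1, a.2 + 1)

/-- A family of `k` pairwise disjoint north/east lattice paths in the staircase
`𝒫 = {(i,j) : 1 ≤ i ≤ j ≤ n}`, each starting at a diagonal point and ending on the right
edge. -/
structure OFamily (n k : ℕ) where
  path : Fin k → List (ℕ × ℕ)
  ne : ∀ ℓ, path ℓ ≠ []
  chain : ∀ ℓ, (path ℓ).Chain' StepO
  first : ∀ ℓ, ∃ st, (path ℓ).head? = some st ∧ st.1 = st.2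
  mem_P : ∀ ℓ, ∀ x ∈ path ℓ, 1 ≤ x.1 ∧ x.1 ≤ x.2 ∧ x.2 ≤ n
  ends : ∀ ℓ, ((path ℓ).getLast?).map Prod.snd = some n
  disj : ∀ ℓ ℓ', ℓ ≠ ℓ' → ∀ x ∈ path ℓ, x ∉ path ℓ'

def OFamily.pointSet {n k : ℕ} (F : OFamily n k) : Finset (ℕ × ℕ) :=
  Finset.univ.biUnion fun ℓ => (F.path ℓ).toFinset

def OFamily.lastRow {n k : ℕ} (F : OFamily n k) (ℓ : Fin k) : ℕ :=
  (((F.path ℓ).getLast?).map Prod.fst).getD 0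

def OFamily.endpointSet {n k : ℕ} (F : OFamily n k) : Finset ℕ :=
  Finset.univ.image F.lastRow

/-- Lexicographic comparison of finite sets of naturals via their sorted enumerations. -/
def lexLE (A B : Finset ℕ) : Prop :=
  A = B ∨ List.Lex (· < ·) (A.sort (· ≤ ·)) (B.sort (· ≤ ·))

/-- `E ⇉ T`: `E` is the lexicographically least `k`-element subset of `{1,…,n}`
containing `T`. -/
def EtoTO (n k : ℕ) (E T : Finset ℕ) : Prop :=
  T ⊆ E ∧ E ⊆ Finset.Icc 1 n ∧ E.card = k ∧
    ∀ E', T ⊆ E' → E' ⊆ Finset.Icc 1 n → E'.card = k → lexLE E E'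

/-- `e` is `T`-nonstandard: the monomial `(∏ f_{ij}^{e(i,j)})·φ_T` is divisible by the
monomial `∏ f_{b_i,c_i}·φ_{{a,d}}` of an `O_k`-split with `{a_1,…,a_s,d_1,…,d_t} = T`. -/
def TNonstandardO (n k m : ℕ) (T : Finset ℕ) (e : (ℕ × ℕ) →₀ ℕ) : Prop :=
  ∃ (r s t : ℕ) (a : Fin s → ℕ) (d : Fin t → ℕ) (b c : Fin r → ℕ),
    StrictMono a ∧ StrictMono d ∧ StrictMono b ∧ StrictMono c ∧
    (∀ i, 1 ≤ a i ∧ a i ≤ n) ∧ (∀ i, 1 ≤ d i ∧ d i ≤ n) ∧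
    (∀ i, 1 ≤ b i ∧ b i ≤ n) ∧ (∀ i, 1 ≤ c i ∧ c i ≤ n) ∧
    (∀ i j, a i < d j) ∧ (∀ i j, b i < d j) ∧ (∀ i, b i ≤ c i) ∧
    s ≤ r ∧ s + t = m ∧ r + t = k + 1 ∧
    (Finset.univ.image a ∪ Finset.univ.image d = T) ∧
    (∀ i, 1 ≤ e (b i, c i))

/-!
A family with endpoint set `E` covering a set `S` of staircase points exists as soon as no
chain of points of `S` increasing in both coordinates is too long: a chain in rows `< x` may
have at most `#{y ∈ E | y < x}` points. For the canonical `E` (the set `T` completed by the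
smallest missing rows) a violating chain is exactly the `b`, `c` part of an `O_k`-split, its
`a` and `d` being the elements of `T` below and above `x`.

The paths are built by a sweep from the right edge to the diagonal: `k` tokens start at the
rows of `E`, and crossing a column each token is pulled south (rows grow southwards) to the
lowest support point lying between it and the next token. Every move is caused by a support
point, so a support point above the topmost token would head a chain violating the bound.

Conversely, the points `(b i, c i)` of a split lie on `r` distinct paths ending above every
`d j`, and the `d j` are the endpoints of `t` further paths, so `r + t ≤ k`.
-/

open Finset

def StrongLT₂ (p q : ℕ × ℕ) : Prop := p.1 < q.1 ∧ p.2 < q.2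

instance : IsTrans (ℕ × ℕ) StrongLT₂ :=
  ⟨fun _ _ _ h₁ h₂ => ⟨h₁.1.trans h₂.1, h₁.2.trans h₂.2⟩⟩

section LatticePath

variable {l : List (ℕ × ℕ)}

lemma List.IsChain.pairwise_fst_ge (hl : l.IsChain StepO) : l.Pairwise fun p q => q.1 ≤ p.1 :=
  List.pairwise_map.mp <| List.isChain_iff_pairwise.mp <|
    (List.isChain_map (R := (· ≥ ·)) Prod.fst).mpr <|
      hl.imp fun _ _ h => by rcases h with ⟨h, -⟩ | rfl <;> simp [*]

lemma List.IsChain.pairwise_snd_le (hl : l.IsChain StepO) : l.Pairwise fun p q => p.2 ≤ q.2 :=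
  List.pairwise_map.mp <| List.isChain_iff_pairwise.mp <|
    (List.isChain_map (R := (· ≤ ·)) Prod.snd).mpr <|
      hl.imp fun _ _ h => by rcases h with ⟨-, h⟩ | rfl <;> simp [*]

lemma List.IsChain.not_strongLT₂ (hl : l.IsChain StepO) {p q : ℕ × ℕ} (hp : p ∈ l)
    (hq : q ∈ l) : ¬ StrongLT₂ p q :=
  List.Pairwise.forall_of_forall_of_flip (R := fun p q => ¬ StrongLT₂ p q)
    (fun _ _ h => h.1.ne rfl)
    (hl.pairwise_fst_ge.imp fun h h' => (h.trans_lt h'.1).false)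
    (hl.pairwise_snd_le.imp fun h h' => (h.trans_lt h'.2).false) hp hq

lemma List.IsChain.getLast_fst_le (hl : l.IsChain StepO) {p : ℕ × ℕ} (hp : p ∈ l) :
    (l.getLast (List.ne_nil_of_mem hp)).1 ≤ p.1 :=
  hl.pairwise_fst_ge.rel_getLast_of_rel_getLast_getLast hp le_rfl

end LatticePath

namespace OFamily

variable {n k : ℕ} (F : OFamily n k)

lemma lastRow_le {ℓ : Fin k} {p : ℕ × ℕ} (hp : p ∈ F.path ℓ) : F.lastRow ℓ ≤ p.1 := by
  rw [lastRow, List.getLast?_eq_some_getLast (F.ne ℓ)]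
  exact (F.chain ℓ).getLast_fst_le hp

lemma mem_pointSet {p : ℕ × ℕ} : p ∈ F.pointSet ↔ ∃ ℓ, p ∈ F.path ℓ := by
  simp [pointSet]

lemma mem_endpointSet {y : ℕ} : y ∈ F.endpointSet ↔ ∃ ℓ, F.lastRow ℓ = y := by
  simp [endpointSet]

end OFamily

theorem not_tNonstandardO_of_subset_pointSet {n k m : ℕ} {T : Finset ℕ} {e : (ℕ × ℕ) →₀ ℕ}
    (F : OFamily n k) (hT : T ⊆ F.endpointSet) (he : ∀ x ∈ e.support, x ∈ F.pointSet) :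
    ¬ TNonstandardO n k m T e := by
  rintro ⟨r, s, t, a, d, b, c, -, hd, hb, hc, -, -, -, -, -, hbd, -, -, -, hrt, hTad, hbc⟩
  have hpath (i : Fin r) : ∃ ℓ, (b i, c i) ∈ F.path ℓ :=
    (F.mem_pointSet).mp <| he _ <| Finsupp.mem_support_iff.mpr (by have := hbc i; omega)
  have hend (j : Fin t) : ∃ ℓ, F.lastRow ℓ = d j :=
    (F.mem_endpointSet).mp <| hT <| hTad ▸ mem_union_right _ (mem_image_of_mem _ (mem_univ j))
  choose ℓ hℓ using hpath
  choose ℓ' hℓ' using hend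
  have hℓ_inj : Function.Injective ℓ := by
    intro i j hij
    by_contra hne
    rcases lt_or_gt_of_ne hne with h | h
    · exact (F.chain (ℓ j)).not_strongLT₂ (hij ▸ hℓ i) (hℓ j) ⟨hb h, hc h⟩
    · exact (F.chain (ℓ i)).not_strongLT₂ (hij ▸ hℓ j) (hℓ i) ⟨hb h, hc h⟩
  have hℓ'_inj : Function.Injective ℓ' :=
    fun i j hij => hd.injective <| by rw [← hℓ' i, ← hℓ' j, hij]
  have hdisj (i : Fin r) (j : Fin t) : ℓ i ≠ ℓ' j := fun h =>
    (hbd i j).not_ge (hℓ' j ▸ h ▸ F.lastRow_le (hℓ i))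
  have := Fintype.card_le_of_injective _ (hℓ_inj.sumElim hℓ'_inj hdisj)
  simp only [Fintype.card_sum, Fintype.card_fin] at this
  omega

lemma List.eq_or_lex_lt_of_countP_le : ∀ {u v : List ℕ}, u.Pairwise (· < ·) →
    v.Pairwise (· < ·) → u.length = v.length →
    (∀ x, v.countP (fun y => decide (y ≤ x)) ≤ u.countP (fun y => decide (y ≤ x))) →
    u = v ∨ List.Lex (· < ·) u v
  | [], v, _, _, hlen, _ => .inl (List.eq_nil_of_length_eq_zero hlen.symm).symm
  | a :: as, [], _, _, hlen, _ => by simp at hlen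
  | a :: as, b :: bs, hu, hv, hlen, hcount => by
    have hab : a ≤ b := by
      by_contra! hba
      have hu0 : (a :: as).countP (fun y => decide (y ≤ b)) = 0 :=
        List.countP_eq_zero.mpr fun z hz => by
          rcases List.mem_cons.mp hz with rfl | hz
          · simpa using hba
          · simpa using hba.trans (List.rel_of_pairwise_cons hu hz)
      have := hcount b
      simp [hu0] at this
    rcases hab.lt_or_eq with hab | rfl
    · exact .inr (.rel hab)
    · refine (List.eq_or_lex_lt_of_countP_le hu.of_cons hv.of_cons (by simpa using hlen)
        fun x => ?_).imp (congrArg _) .cons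
      have := hcount x
      simp only [List.countP_cons] at this
      omega

lemma Finset.countP_sort_eq_card_filter (s : Finset ℕ) (x : ℕ) :
    (s.sort (· ≤ ·)).countP (fun y => decide (y ≤ x)) = #(s.filter (· ≤ x)) := by
  rw [← Multiset.coe_countP, Finset.sort_eq, Multiset.countP_eq_card_filter]
  rfl

theorem lexLE_of_card_filter_le {A B : Finset ℕ} (hAB : #A = #B)
    (h : ∀ x, #(B.filter (· ≤ x)) ≤ #(A.filter (· ≤ x))) : lexLE A B := by
  refine (List.eq_or_lex_lt_of_countP_le A.sortedLT_sort.pairwise B.sortedLT_sort.pairwise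
    (by simp [hAB]) fun x => ?_).imp (fun hAB => ?_) id
  · simpa only [Finset.countP_sort_eq_card_filter] using h x
  · simpa using congrArg List.toFinset hAB

namespace Finset

variable (D : Finset ℕ) (j : ℕ)

lemma mem_of_mem_take_sort {x : ℕ} (hx : x ∈ (D.sort (· ≤ ·)).take j) : x ∈ D :=
  (D.mem_sort _).mp (List.mem_of_mem_take hx)

lemma lt_of_mem_take_sort {x y : ℕ} (hx : x ∈ (D.sort (· ≤ ·)).take j) (hy : y ∈ D)
    (hy' : y ∉ (D.sort (· ≤ ·)).take j) : x < y := by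
  have hsplit := List.take_append_drop j (D.sort (· ≤ ·))
  have hpw := D.sortedLT_sort.pairwise
  rw [← hsplit] at hpw
  refine (List.pairwise_append.mp hpw).2.2 x hx y ?_
  have hy := (D.mem_sort (· ≤ ·)).mpr hy
  rw [← hsplit, List.mem_append] at hy
  exact hy.resolve_left hy'

lemma card_toFinset_take_sort (hj : j ≤ #D) : #((D.sort (· ≤ ·)).take j).toFinset = j := by
  rw [List.toFinset_card_of_nodup ((D.sort_nodup _).sublist (List.take_sublist _ _)),
    List.length_take, length_sort]
  omega

lemma card_filter_le_card_filter_take_sort (hj : j ≤ #D) {G : Finset ℕ} (hG : G ⊆ D)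
    (hGj : #G ≤ j) (x : ℕ) :
    #(G.filter (· ≤ x)) ≤ #(((D.sort (· ≤ ·)).take j).toFinset.filter (· ≤ x)) := by
  by_cases hall : ∀ f ∈ (D.sort (· ≤ ·)).take j, f ≤ x
  · calc #(G.filter (· ≤ x)) ≤ j := (card_filter_le _ _).trans hGj
      _ = _ := by rw [filter_true_of_mem (by simpa using hall), card_toFinset_take_sort D j hj]
  · push Not at hall
    obtain ⟨f, hf, hxf⟩ := hall
    refine card_le_card fun y hy => ?_
    rw [mem_filter] at hy ⊢
    refine ⟨List.mem_toFinset.mpr ?_, hy.2⟩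
    by_contra hy'
    exact (lt_of_mem_take_sort D j hf (hG hy.1) hy').not_ge (hy.2.trans hxf.le)

end Finset

def canonicalEndpoints (n k : ℕ) (T : Finset ℕ) : Finset ℕ :=
  T ∪ (((Icc 1 n \ T).sort (· ≤ ·)).take (k - #T)).toFinset

section CanonicalEndpoints

variable {n k : ℕ} {T : Finset ℕ}

lemma disjoint_take_sort_sdiff (j : ℕ) :
    Disjoint T (((Icc 1 n \ T).sort (· ≤ ·)).take j).toFinset :=
  disjoint_right.mpr fun _ hy =>
    (mem_sdiff.mp (mem_of_mem_take_sort _ _ (List.mem_toFinset.mp hy))).2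

lemma card_sdiff_ge (hT : T ⊆ Icc 1 n) (hkn : k ≤ n) : k - #T ≤ #(Icc 1 n \ T) := by
  rw [card_sdiff_of_subset hT, Nat.card_Icc]
  omega

lemma canonicalEndpoints_subset (hT : T ⊆ Icc 1 n) : canonicalEndpoints n k T ⊆ Icc 1 n :=
  union_subset hT fun _ hy =>
    (mem_sdiff.mp (mem_of_mem_take_sort _ _ (List.mem_toFinset.mp hy))).1

lemma card_canonicalEndpoints (hT : T ⊆ Icc 1 n) (hTk : #T ≤ k) (hkn : k ≤ n) :
    #(canonicalEndpoints n k T) = k := by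
  rw [canonicalEndpoints, card_union_of_disjoint (disjoint_take_sort_sdiff _),
    card_toFinset_take_sort _ _ (card_sdiff_ge hT hkn)]
  omega

lemma lt_of_notMem_canonicalEndpoints {y : ℕ} (hy : y ∈ Icc 1 n)
    (hyE : y ∉ canonicalEndpoints n k T) {f : ℕ}
    (hf : f ∈ ((Icc 1 n \ T).sort (· ≤ ·)).take (k - #T)) : f < y := by
  simp only [canonicalEndpoints, mem_union, List.mem_toFinset, not_or] at hyE
  exact lt_of_mem_take_sort _ _ hf (mem_sdiff.mpr ⟨hy, hyE.1⟩) hyE.2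

theorem etoTO_canonicalEndpoints (hT : T ⊆ Icc 1 n) (hTk : #T ≤ k) (hkn : k ≤ n) :
    EtoTO n k (canonicalEndpoints n k T) T := by
  refine ⟨subset_union_left, canonicalEndpoints_subset hT, card_canonicalEndpoints hT hTk hkn,
    fun E hTE hE hEk => lexLE_of_card_filter_le (by rw [card_canonicalEndpoints hT hTk hkn, hEk])
      fun x => ?_⟩
  have hsplit : E = T ∪ (E \ T) := (union_sdiff_of_subset hTE).symm
  rw [hsplit, canonicalEndpoints, filter_union, filter_union,
    card_union_of_disjoint (disjoint_filter_filter disjoint_sdiff),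
    card_union_of_disjoint (disjoint_filter_filter (disjoint_take_sort_sdiff _))]
  refine Nat.add_le_add_left (card_filter_le_card_filter_take_sort _ _ (card_sdiff_ge hT hkn)
    (sdiff_subset_sdiff hE subset_rfl) ?_ x) _
  rw [card_sdiff_of_subset hTE, hEk]

end CanonicalEndpoints

def ChainBounded (S : Finset (ℕ × ℕ)) (N : ℕ → ℕ) : Prop :=
  ∀ (x : ℕ) (l : List (ℕ × ℕ)), l.IsChain StrongLT₂ → (∀ p ∈ l, p ∈ S ∧ p.1 < x) →
    l.length ≤ N x

section Standard

variable {n k m : ℕ} {T : Finset ℕ} {e : (ℕ × ℕ) →₀ ℕ}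

theorem tNonstandardO_of_chain (hT : T ⊆ Icc 1 n) (hTm : #T = m)
    (he : ∀ p ∈ e.support, 1 ≤ p.1 ∧ p.1 ≤ p.2 ∧ p.2 ≤ n) {x : ℕ} {l : List (ℕ × ℕ)}
    (hl : l.IsChain StrongLT₂) (hlx : ∀ p ∈ l, p ∈ e.support ∧ p.1 < x)
    (hs : #(T.filter (· < x)) ≤ l.length)
    (hlen : l.length + #(T.filter fun z => ¬ z < x) = k + 1) : TNonstandardO n k m T e := by
  have hpw := List.pairwise_iff_get.mp (List.isChain_iff_pairwise.mp hl)
  have hb (i : Fin l.length) := he _ (hlx _ (l.get_mem i)).1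
  have ha (i : Fin #(T.filter (· < x))) := mem_filter.mp (orderEmbOfFin_mem _ rfl i)
  have hd (i : Fin #(T.filter fun z => ¬ z < x)) := mem_filter.mp (orderEmbOfFin_mem _ rfl i)
  refine ⟨l.length, _, _, (T.filter (· < x)).orderEmbOfFin rfl,
    (T.filter fun z => ¬ z < x).orderEmbOfFin rfl, fun i => (l.get i).1, fun i => (l.get i).2,
    (orderEmbOfFin _ _).strictMono, (orderEmbOfFin _ _).strictMono,
    fun i j h => (hpw i j h).1, fun i j h => (hpw i j h).2,
    fun i => mem_Icc.mp (hT (ha i).1), fun i => mem_Icc.mp (hT (hd i).1),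
    fun i => ⟨(hb i).1, (hb i).2.1.trans (hb i).2.2⟩,
    fun i => ⟨(hb i).1.trans (hb i).2.1, (hb i).2.2⟩,
    fun i j => (ha i).2.trans_le (not_lt.mp (hd j).2),
    fun i j => (hlx _ (l.get_mem i)).2.trans_le (not_lt.mp (hd j).2),
    fun i => (hb i).2.1, hs, ?_, hlen, ?_, fun i => ?_⟩
  · rw [← hTm, card_filter_add_card_filter_not]
  · rw [image_orderEmbOfFin_univ, image_orderEmbOfFin_univ, filter_union_filter_not_eq]
  · have := Finsupp.mem_support_iff.mp (hlx _ (l.get_mem i)).1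
    dsimp only
    rw [Prod.mk.eta]
    omega

/-- If all rows below `x` are endpoints, the rows of the chain fit among them; otherwise all the
fillers of `canonicalEndpoints` lie below `x`, and a chain longer than the bound would be long
enough to feed `tNonstandardO_of_chain`. -/
theorem chainBounded_of_not_tNonstandardO (hT : T ⊆ Icc 1 n) (hTm : #T = m) (hmk : m ≤ k)
    (hkn : k ≤ n) (he : ∀ p ∈ e.support, 1 ≤ p.1 ∧ p.1 ≤ p.2 ∧ p.2 ≤ n)
    (hstd : ¬ TNonstandardO n k m T e) :
    ChainBounded e.support fun x => #((canonicalEndpoints n k T).filter (· < x)) := by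
  intro x l hl hlx
  set E := canonicalEndpoints n k T
  by_cases hsmall : ∀ y ∈ Icc 1 n, y < x → y ∈ E
  · have hrows : (l.map Prod.fst).Nodup :=
      List.pairwise_map.mpr ((List.isChain_iff_pairwise.mp hl).imp fun h => h.1.ne)
    calc l.length = #(l.map Prod.fst).toFinset := by
          rw [List.toFinset_card_of_nodup hrows, List.length_map]
      _ ≤ #(E.filter (· < x)) := card_le_card fun y hy => by
          obtain ⟨p, hp, rfl⟩ := List.mem_map.mp (List.mem_toFinset.mp hy)
          have := he _ (hlx p hp).1
          exact mem_filter.mpr ⟨hsmall _ (mem_Icc.mpr ⟨by omega, by omega⟩) (hlx p hp).2,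
            (hlx p hp).2⟩
  · push Not at hsmall
    obtain ⟨y, hy, hyx, hyE⟩ := hsmall
    by_contra! hlong
    have hfill : #(T.filter (· < x)) + (k - m) ≤ #(E.filter (· < x)) := by
      rw [← hTm, ← card_toFinset_take_sort _ _ (card_sdiff_ge hT hkn),
        ← card_union_of_disjoint ((disjoint_take_sort_sdiff _).mono_left (filter_subset _ _))]
      exact card_le_card <| union_subset (filter_subset_filter _ subset_union_left)
        fun f hf => mem_filter.mpr ⟨mem_union_right _ hf,
          (lt_of_notMem_canonicalEndpoints hy hyE (List.mem_toFinset.mp hf)).trans hyx⟩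
    have hst := card_filter_add_card_filter_not (s := T) (· < x)
    exact hstd (tNonstandardO_of_chain hT hTm he (hl.take (k + 1 - #(T.filter fun z => ¬ z < x)))
      (fun p hp => hlx p (List.mem_of_mem_take hp)) (by rw [List.length_take]; omega)
      (by rw [List.length_take]; omega))

end Standard

def dragStep (S : Finset (ℕ × ℕ)) (y : ℕ → ℕ) (c v : ℕ) : ℕ :=
  max (y v) ((S.filter fun p => p.2 = c ∧ y v ≤ p.1 ∧ p.1 < y (v + 1)).sup Prod.fst)

section DragStep

variable {S : Finset (ℕ × ℕ)} {y : ℕ → ℕ} {c v : ℕ}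

lemma le_dragStep : y v ≤ dragStep S y c v := le_max_left _ _

lemma dragStep_lt (h : y v < y (v + 1)) : dragStep S y c v < y (v + 1) :=
  max_lt h <| (Finset.sup_lt_iff (h.trans_le' bot_le)).mpr fun _ hp => (mem_filter.mp hp).2.2.2

lemma le_dragStep_of_mem {p : ℕ × ℕ} (hp : p ∈ S) (hpc : p.2 = c) (h₁ : y v ≤ p.1)
    (h₂ : p.1 < y (v + 1)) : p.1 ≤ dragStep S y c v :=
  le_max_of_le_right <| le_sup (f := Prod.fst) (mem_filter.mpr ⟨hp, hpc, h₁, h₂⟩)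

lemma dragStep_le (hS : ∀ p ∈ S, p.1 ≤ p.2) (h : y v ≤ c) : dragStep S y c v ≤ c :=
  max_le h <| Finset.sup_le fun p hp => (mem_filter.mp hp).2.1 ▸ hS p (mem_filter.mp hp).1

lemma dragStep_eq_self (hS : ∀ p ∈ S, p.1 ≤ p.2) (h : c < y v) : dragStep S y c v = y v := by
  refine max_eq_left <| Finset.sup_le fun p hp => ?_
  have := hS p (mem_filter.mp hp).1
  have := mem_filter.mp hp
  omega

lemma exists_eq_dragStep (h : dragStep S y c v ≠ y v) :
    ∃ p ∈ S, p.2 = c ∧ y v ≤ p.1 ∧ p.1 < y (v + 1) ∧ p.1 = dragStep S y c v := by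
  set F := S.filter fun p => p.2 = c ∧ y v ≤ p.1 ∧ p.1 < y (v + 1)
  have hlt : y v < F.sup Prod.fst := lt_of_not_ge fun hle => h (max_eq_left hle)
  have hF : F.Nonempty := nonempty_iff_ne_empty.mpr fun h₀ => by
    rw [h₀, sup_empty] at hlt
    exact Nat.not_lt_zero _ hlt
  obtain ⟨p, hp, hsup⟩ := exists_mem_eq_sup _ hF Prod.fst
  obtain ⟨hpS, hpc, hp₁, hp₂⟩ := mem_filter.mp hp
  exact ⟨p, hpS, hpc, hp₁, hp₂, (max_eq_right hlt.le).trans hsup |>.symm⟩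

lemma strictMono_dragStep (hy : StrictMono y) : StrictMono (dragStep S y c) :=
  strictMono_nat_of_lt_succ fun _ => (dragStep_lt (hy (Nat.lt_succ_self _))).trans_le le_dragStep

end DragStep

/-- `sweep S y₀ n c v` is the row of token `v` once the columns `n, n - 1, …, c + 1` have been
crossed; the tokens start at the rows `y₀` on the right edge. -/
def sweep (S : Finset (ℕ × ℕ)) (y₀ : ℕ → ℕ) (n c : ℕ) : ℕ → ℕ :=
  if c < n then dragStep S (sweep S y₀ n (c + 1)) (c + 1) else y₀
termination_by n - c

section Sweep

variable {S : Finset (ℕ × ℕ)} {y₀ : ℕ → ℕ} {n : ℕ}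

lemma sweep_of_le {c : ℕ} (h : n ≤ c) : sweep S y₀ n c = y₀ := by
  rw [sweep, if_neg h.not_gt]

lemma sweep_of_lt {c : ℕ} (h : c < n) :
    sweep S y₀ n c = dragStep S (sweep S y₀ n (c + 1)) (c + 1) := by
  rw [sweep, if_pos h]

lemma sweep_sub_one {c : ℕ} (h₀ : c ≠ 0) (h : c ≤ n) :
    sweep S y₀ n (c - 1) = dragStep S (sweep S y₀ n c) c := by
  obtain ⟨c, rfl⟩ := Nat.exists_eq_succ_of_ne_zero h₀
  exact sweep_of_lt h

lemma antitone_sweep (v : ℕ) : Antitone fun c => sweep S y₀ n c v := by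
  refine antitone_nat_of_succ_le fun c => ?_
  rcases lt_or_ge c n with h | h
  · rw [sweep_of_lt h]
    exact le_dragStep
  · rw [sweep_of_le h, sweep_of_le (h.trans c.le_succ)]

lemma le_sweep (c v : ℕ) : y₀ v ≤ sweep S y₀ n c v := by
  rcases le_total c n with h | h
  · simpa only [sweep_of_le le_rfl] using antitone_sweep (S := S) (y₀ := y₀) (n := n) v h
  · rw [sweep_of_le h]

lemma strictMono_sweep (hy₀ : StrictMono y₀) (c : ℕ) : StrictMono (sweep S y₀ n c) := by
  rcases lt_or_ge c n with h | h
  · rw [sweep_of_lt h]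
    exact strictMono_dragStep (strictMono_sweep hy₀ (c + 1))
  · rwa [sweep_of_le h]
termination_by n - c

lemma sweep_sub_one_lt (hy₀ : StrictMono y₀) {c : ℕ} (h₀ : c ≠ 0) (h : c ≤ n) (v : ℕ) :
    sweep S y₀ n (c - 1) v < sweep S y₀ n c (v + 1) := by
  rw [sweep_sub_one h₀ h]
  exact dragStep_lt (strictMono_sweep hy₀ c (Nat.lt_succ_self v))

lemma sweep_eq_of_lt (hS : ∀ p ∈ S, p.1 ≤ p.2) {c v : ℕ} (hcn : c ≤ n)
    (h : c < sweep S y₀ n c v) : ∀ c' ≤ c, sweep S y₀ n c' v = sweep S y₀ n c v := by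
  induction c with
  | zero => exact fun c' hc' => by rw [Nat.le_zero.mp hc']
  | succ c ih =>
    have hstep : sweep S y₀ n c v = sweep S y₀ n (c + 1) v := by
      rw [sweep_of_lt hcn, dragStep_eq_self hS h]
    intro c' hc'
    rcases hc'.lt_or_eq with hc' | rfl
    · rw [ih (by omega) (by omega) c' (by omega), hstep]
    · rfl

/-- Every move of a token is caused by a point of `S` lying above the next token; following
these causes from `q` gives the chain. -/
lemma exists_chain_of_lt_sweep (c v : ℕ) (q : ℕ × ℕ) (hq₁ : q.1 < sweep S y₀ n c v)
    (hq₂ : q.2 ≤ c) : ∃ l : List (ℕ × ℕ), (q :: l).IsChain StrongLT₂ ∧ (∀ p ∈ l, p ∈ S) ∧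
      ∀ p ∈ q :: l, p.1 < y₀ (v + l.length) := by
  rcases lt_or_ge c n with h | h
  · rw [sweep_of_lt h] at hq₁
    by_cases hdrag : dragStep S (sweep S y₀ n (c + 1)) (c + 1) v = sweep S y₀ n (c + 1) v
    · exact exists_chain_of_lt_sweep (c + 1) v q (hdrag ▸ hq₁) (hq₂.trans c.le_succ)
    · obtain ⟨p, hpS, hpc, -, hp, hpq⟩ := exists_eq_dragStep hdrag
      obtain ⟨l, hl, hlS, hlrow⟩ := exists_chain_of_lt_sweep (c + 1) (v + 1) p hp hpc.le
      have hqp : q.1 < p.1 := hpq ▸ hq₁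
      refine ⟨p :: l, List.isChain_cons_cons.mpr ⟨⟨hqp, by omega⟩, hl⟩,
        List.forall_mem_cons.mpr ⟨hpS, hlS⟩, fun r hr => ?_⟩
      rw [List.length_cons, ← add_assoc, add_right_comm]
      rcases List.mem_cons.mp hr with rfl | hr
      · exact hqp.trans (hlrow p List.mem_cons_self)
      · exact hlrow r hr
  · exact ⟨[], List.isChain_singleton q, by simp, by simpa [sweep_of_le h] using hq₁⟩
termination_by n - c

lemma sweep_zero_le_of_mem {N : ℕ → ℕ} (hchain : ChainBounded S N) (hN : ∀ u, N (y₀ u) ≤ u)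
    {p : ℕ × ℕ} (hp : p ∈ S) : sweep S y₀ n p.2 0 ≤ p.1 := by
  by_contra! h
  obtain ⟨l, hl, hlS, hrow⟩ := exists_chain_of_lt_sweep p.2 0 p h le_rfl
  have := (hchain _ (p :: l) hl fun r hr =>
    ⟨(List.mem_cons.mp hr).elim (· ▸ hp) (hlS r), by simpa using hrow r hr⟩).trans (hN l.length)
  simp at this

lemma exists_sweep_le_le_sweep_sub_one (hS : ∀ p ∈ S, 1 ≤ p.1 ∧ p.1 ≤ p.2 ∧ p.2 ≤ n)
    {k : ℕ} (hk : n < y₀ k) {N : ℕ → ℕ} (hchain : ChainBounded S N) (hN : ∀ u, N (y₀ u) ≤ u)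
    {p : ℕ × ℕ} (hp : p ∈ S) :
    ∃ v < k, sweep S y₀ n p.2 v ≤ p.1 ∧ p.1 ≤ sweep S y₀ n (p.2 - 1) v := by
  have hpS := hS p hp
  have hk' : p.1 < sweep S y₀ n p.2 k := by
    have := le_sweep (S := S) (y₀ := y₀) (n := n) p.2 k
    omega
  have hex : ∃ w, p.1 < sweep S y₀ n p.2 w := ⟨k, hk'⟩
  have hw₀ : Nat.find hex ≠ 0 := fun h₀ =>
    (Nat.find_spec hex).not_ge (h₀ ▸ sweep_zero_le_of_mem hchain hN hp)
  obtain ⟨v, hv⟩ := Nat.exists_eq_succ_of_ne_zero hw₀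
  have hlo : sweep S y₀ n p.2 v ≤ p.1 := not_lt.mp (Nat.find_min hex (by omega))
  refine ⟨v, by have := Nat.find_min' hex hk'; omega, hlo, ?_⟩
  rw [sweep_sub_one (by omega) hpS.2.2]
  have hhi := Nat.find_spec hex
  rw [hv] at hhi
  exact le_dragStep_of_mem hp rfl hlo hhi

def startCol (S : Finset (ℕ × ℕ)) (y₀ : ℕ → ℕ) (n v : ℕ) : ℕ := sInf {c | sweep S y₀ n c v ≤ c}

section StartCol

variable {v : ℕ}

lemma startCol_le (hv : y₀ v ≤ n) : startCol S y₀ n v ≤ n :=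
  Nat.sInf_le (show sweep S y₀ n n v ≤ n by rwa [sweep_of_le le_rfl])

lemma sweep_startCol_le (hv : y₀ v ≤ n) : sweep S y₀ n (startCol S y₀ n v) v ≤ startCol S y₀ n v :=
  Nat.sInf_mem (s := {c | sweep S y₀ n c v ≤ c}) ⟨n, by rwa [Set.mem_ofPred, sweep_of_le le_rfl]⟩

lemma sweep_le_of_startCol_le (hv : y₀ v ≤ n) (hS : ∀ p ∈ S, p.1 ≤ p.2) {c : ℕ} (hc : startCol S y₀ n v ≤ c)
    (hcn : c ≤ n) : sweep S y₀ n c v ≤ c := by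
  by_contra! h
  have := sweep_eq_of_lt hS hcn h _ hc
  have := sweep_startCol_le (S := S) hv
  omega

lemma sweep_sub_one_le (hv : y₀ v ≤ n) (hS : ∀ p ∈ S, p.1 ≤ p.2) {c : ℕ} (hc : startCol S y₀ n v ≤ c)
    (hcn : c ≤ n) : sweep S y₀ n (c - 1) v ≤ c := by
  rcases eq_or_ne c 0 with rfl | h₀
  · exact sweep_le_of_startCol_le hv hS hc hcn
  · rw [sweep_sub_one h₀ hcn]
    exact dragStep_le hS (sweep_le_of_startCol_le hv hS hc hcn)

lemma startCol_ne_zero (hv : y₀ v ≤ n) (h₀ : 0 < y₀ v) : startCol S y₀ n v ≠ 0 := fun h => by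
  have := sweep_startCol_le (S := S) hv
  have := le_sweep (S := S) (y₀ := y₀) (n := n) (startCol S y₀ n v) v
  omega

lemma sweep_startCol_sub_one (hv : y₀ v ≤ n) (hS : ∀ p ∈ S, p.1 ≤ p.2) (h₀ : 0 < y₀ v) :
    sweep S y₀ n (startCol S y₀ n v - 1) v = startCol S y₀ n v := by
  have hne := startCol_ne_zero (S := S) hv h₀
  have hlt : ¬ sweep S y₀ n (startCol S y₀ n v - 1) v ≤ startCol S y₀ n v - 1 :=
    Nat.notMem_of_lt_sInf (s := {c | sweep S y₀ n c v ≤ c}) (Nat.sub_one_lt hne)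
  have := sweep_sub_one_le hv hS le_rfl (startCol_le (S := S) hv)
  omega

end StartCol

end Sweep

def columnRun (y : ℕ → ℕ) (c : ℕ) : List (ℕ × ℕ) :=
  (List.range (y (c - 1) - y c + 1)).map fun i => (y (c - 1) - i, c)

def columnPath (y : ℕ → ℕ) (a b : ℕ) : List (ℕ × ℕ) :=
  (List.range (b + 1 - a)).flatMap fun i => columnRun y (a + i)

section ColumnPath

variable {y : ℕ → ℕ} {a b c : ℕ}

lemma mem_columnRun (hy : Antitone y) {x : ℕ × ℕ} :
    x ∈ columnRun y c ↔ x.2 = c ∧ y c ≤ x.1 ∧ x.1 ≤ y (c - 1) := by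
  have := hy (Nat.sub_le c 1)
  simp only [columnRun, List.mem_map, List.mem_range]
  constructor
  · rintro ⟨i, hi, rfl⟩
    exact ⟨rfl, by omega, by omega⟩
  · rintro ⟨hc, h₁, h₂⟩
    exact ⟨y (c - 1) - x.1, by omega, Prod.ext (by simp; omega) hc.symm⟩

lemma columnRun_ne_nil : columnRun y c ≠ [] := by simp [columnRun]

lemma head?_columnRun : (columnRun y c).head? = some (y (c - 1), c) := by
  simp [columnRun, List.head?_range]

lemma getLast?_columnRun (hy : Antitone y) : (columnRun y c).getLast? = some (y c, c) := by
  have := hy (Nat.sub_le c 1)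
  simp [columnRun, List.getLast?_range]
  omega

lemma isChain_columnRun : (columnRun y c).IsChain StepO := by
  refine (List.isChain_map _).mpr ((List.isChain_range_succ _ _).mpr fun i hi => ?_)
  exact .inl ⟨by omega, rfl⟩

lemma mem_columnPath (hy : Antitone y) {x : ℕ × ℕ} :
    x ∈ columnPath y a b ↔ a ≤ x.2 ∧ x.2 ≤ b ∧ y x.2 ≤ x.1 ∧ x.1 ≤ y (x.2 - 1) := by
  simp only [columnPath, List.mem_flatMap, List.mem_range, mem_columnRun hy]
  constructor
  · rintro ⟨i, hi, hx, h⟩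
    rw [hx]
    exact ⟨by omega, by omega, h⟩
  · rintro ⟨ha, hb, h⟩
    exact ⟨x.2 - a, by omega, by omega, by rwa [Nat.add_sub_cancel' ha]⟩

lemma isChain_columnPath (hy : Antitone y) : (columnPath y a b).IsChain StepO := by
  rw [columnPath, List.flatMap_def, List.isChain_flatten (by simp [columnRun_ne_nil])]
  refine ⟨by simpa using fun _ _ => isChain_columnRun, (List.isChain_map _).mpr
    ((List.isChain_range _ _).mpr fun i _ => ?_)⟩
  simp only [getLast?_columnRun hy, head?_columnRun, Option.mem_some_iff, forall_eq']
  exact .inr rfl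

lemma head?_columnPath (h : a ≤ b) : (columnPath y a b).head? = some (y (a - 1), a) := by
  obtain ⟨d, hd⟩ : ∃ d, b + 1 - a = d + 1 := ⟨b - a, by omega⟩
  simp [columnPath, hd, List.range_succ_eq_map, List.head?_append, head?_columnRun]

lemma getLast?_columnPath (hy : Antitone y) (h : a ≤ b) :
    (columnPath y a b).getLast? = some (y b, b) := by
  obtain ⟨d, hd⟩ : ∃ d, b + 1 - a = d + 1 := ⟨b - a, by omega⟩
  have hb : a + d = b := by omega
  simp [columnPath, hd, List.range_succ, List.getLast?_append, getLast?_columnRun hy, hb]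

lemma columnPath_ne_nil (h : a ≤ b) : columnPath y a b ≠ [] := fun h' => by
  simpa [h'] using head?_columnPath (y := y) h

end ColumnPath

def sweepPath (S : Finset (ℕ × ℕ)) (y₀ : ℕ → ℕ) (n v : ℕ) : List (ℕ × ℕ) :=
  columnPath (fun c => sweep S y₀ n c v) (startCol S y₀ n v) n

section SweepPath

variable {S : Finset (ℕ × ℕ)} {y₀ : ℕ → ℕ} {n v : ℕ} {x : ℕ × ℕ}

lemma mem_sweepPath : x ∈ sweepPath S y₀ n v ↔ startCol S y₀ n v ≤ x.2 ∧ x.2 ≤ n ∧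
    sweep S y₀ n x.2 v ≤ x.1 ∧ x.1 ≤ sweep S y₀ n (x.2 - 1) v :=
  mem_columnPath (antitone_sweep v)

lemma mem_staircase_of_mem_sweepPath (hS : ∀ p ∈ S, p.1 ≤ p.2) (hv : y₀ v ≤ n) (h₀ : 0 < y₀ v)
    (hx : x ∈ sweepPath S y₀ n v) : 1 ≤ x.1 ∧ x.1 ≤ x.2 ∧ x.2 ≤ n := by
  obtain ⟨hσ, hn, hlo, hhi⟩ := mem_sweepPath.mp hx
  have := le_sweep (S := S) (y₀ := y₀) (n := n) x.2 v
  exact ⟨by omega, hhi.trans (sweep_sub_one_le hv hS hσ hn), hn⟩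

lemma notMem_sweepPath (hy₀ : StrictMono y₀) (hv : y₀ v ≤ n) (h₀ : 0 < y₀ v) {w : ℕ}
    (hvw : v < w) (hx : x ∈ sweepPath S y₀ n v) : x ∉ sweepPath S y₀ n w := fun hx' => by
  obtain ⟨hσ, hn, -, hhi⟩ := mem_sweepPath.mp hx
  have hlo := (mem_sweepPath.mp hx').2.2.1
  have hgap := sweep_sub_one_lt (S := S) hy₀
    (fun h => startCol_ne_zero (S := S) hv h₀ (Nat.le_zero.mp (h ▸ hσ))) hn v
  have := strictMono_sweep (S := S) (n := n) hy₀ x.2 |>.monotone (show v + 1 ≤ w from hvw)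
  omega

end SweepPath

def sweepFamily {S : Finset (ℕ × ℕ)} {y₀ : ℕ → ℕ} {n k : ℕ} (hS : ∀ p ∈ S, p.1 ≤ p.2)
    (hy₀ : StrictMono y₀) (h₀ : ∀ v, 0 < y₀ v) (hk : ∀ v < k, y₀ v ≤ n) : OFamily n k where
  path ℓ := sweepPath S y₀ n ℓ
  ne ℓ := columnPath_ne_nil (startCol_le (hk ℓ ℓ.2))
  chain ℓ := isChain_columnPath (antitone_sweep ℓ)
  first ℓ := ⟨_, head?_columnPath (startCol_le (hk ℓ ℓ.2)),
    sweep_startCol_sub_one (hk ℓ ℓ.2) hS (h₀ ℓ)⟩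
  mem_P ℓ _ := mem_staircase_of_mem_sweepPath hS (hk ℓ ℓ.2) (h₀ ℓ)
  ends ℓ := by
    rw [sweepPath, getLast?_columnPath (antitone_sweep ℓ) (startCol_le (hk ℓ ℓ.2))]
    rfl
  disj ℓ ℓ' hne x hx hx' := by
    rcases lt_or_gt_of_ne (Fin.val_ne_of_ne hne) with h | h
    · exact notMem_sweepPath hy₀ (hk ℓ ℓ.2) (h₀ ℓ) h hx hx'
    · exact notMem_sweepPath hy₀ (hk ℓ' ℓ'.2) (h₀ ℓ') h hx' hx

section SweepFamily

variable {S : Finset (ℕ × ℕ)} {y₀ : ℕ → ℕ} {n k : ℕ} (hS : ∀ p ∈ S, p.1 ≤ p.2)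
  (hy₀ : StrictMono y₀) (h₀ : ∀ v, 0 < y₀ v) (hk : ∀ v < k, y₀ v ≤ n)

lemma sweepFamily_lastRow (ℓ : Fin k) : (sweepFamily hS hy₀ h₀ hk).lastRow ℓ = y₀ ℓ := by
  simp only [OFamily.lastRow, sweepFamily, sweepPath,
    getLast?_columnPath (antitone_sweep _) (startCol_le (hk ℓ ℓ.2))]
  exact congrFun (sweep_of_le le_rfl) _

lemma mem_sweepFamily_pointSet (hSn : ∀ p ∈ S, 1 ≤ p.1 ∧ p.1 ≤ p.2 ∧ p.2 ≤ n)
    (hkn : n < y₀ k) {N : ℕ → ℕ} (hchain : ChainBounded S N) (hN : ∀ u, N (y₀ u) ≤ u)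
    {p : ℕ × ℕ} (hp : p ∈ S) : p ∈ (sweepFamily hS hy₀ h₀ hk).pointSet := by
  obtain ⟨v, hv, hlo, hhi⟩ := exists_sweep_le_le_sweep_sub_one hSn hkn hchain hN hp
  refine (OFamily.mem_pointSet _).mpr ⟨⟨v, hv⟩, mem_sweepPath.mpr ⟨?_, (hSn p hp).2.2, hlo, hhi⟩⟩
  exact Nat.sInf_le (show sweep S y₀ n p.2 v ≤ p.2 from hlo.trans (hSn p hp).2.1)

end SweepFamily

/-- The elements of `E` in increasing order, continued by `n + 1, n + 2, …`: the phantom token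
`#E` then lies south of every point of the staircase. -/
def endpointEnum (n : ℕ) (E : Finset ℕ) : ℕ → ℕ := Nat.nth fun y => y ∈ E ∨ n < y

section EndpointEnum

variable {n : ℕ} {E : Finset ℕ}

lemma infinite_mem_or_lt : {y | y ∈ E ∨ n < y}.Infinite :=
  (Set.Ioi_infinite n).mono fun _ hy => Or.inr hy

lemma strictMono_endpointEnum : StrictMono (endpointEnum n E) :=
  Nat.nth_strictMono infinite_mem_or_lt

lemma count_mem_or_lt (hE : E ⊆ Icc 1 n) : Nat.count (fun y => y ∈ E ∨ n < y) (n + 1) = #E := by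
  rw [Nat.count_eq_card_filter_range]
  congr 1
  ext y
  simp only [mem_filter, mem_range]
  constructor
  · rintro ⟨hy, hyE | hny⟩
    exacts [hyE, by omega]
  · intro hy
    have := mem_Icc.mp (hE hy)
    exact ⟨by omega, Or.inl hy⟩

lemma endpointEnum_le_iff (hE : E ⊆ Icc 1 n) {v : ℕ} : endpointEnum n E v ≤ n ↔ v < #E := by
  rw [← Nat.lt_succ_iff, endpointEnum, ← Nat.lt_nth_iff_count_lt infinite_mem_or_lt,
    count_mem_or_lt hE]

lemma endpointEnum_mem (hE : E ⊆ Icc 1 n) {v : ℕ} (hv : v < #E) : endpointEnum n E v ∈ E :=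
  (Nat.nth_mem_of_infinite infinite_mem_or_lt v).resolve_right
    (not_lt.mpr ((endpointEnum_le_iff hE).mpr hv))

lemma endpointEnum_pos (hE : E ⊆ Icc 1 n) (v : ℕ) : 0 < endpointEnum n E v := by
  rcases Nat.nth_mem_of_infinite (infinite_mem_or_lt (E := E) (n := n)) v with h | h
  · exact (mem_Icc.mp (hE h)).1
  · exact (Nat.zero_le n).trans_lt h

lemma card_filter_lt_endpointEnum_le (u : ℕ) : #(E.filter (· < endpointEnum n E u)) ≤ u := by
  calc #(E.filter (· < endpointEnum n E u))
      ≤ Nat.count (fun y => y ∈ E ∨ n < y) (endpointEnum n E u) := by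
        rw [Nat.count_eq_card_filter_range]
        exact card_le_card fun y hy => by
          simp only [mem_filter, mem_range] at hy ⊢
          exact ⟨hy.2, Or.inl hy.1⟩
    _ = u := Nat.count_nth_of_infinite infinite_mem_or_lt u

lemma image_endpointEnum (hE : E ⊆ Icc 1 n) :
    univ.image (fun v : Fin #E => endpointEnum n E v) = E := by
  refine Subset.antisymm (fun y hy => ?_) fun y hy => ?_
  · obtain ⟨v, -, rfl⟩ := mem_image.mp hy
    exact endpointEnum_mem hE v.2
  · have hv : Nat.count (fun y => y ∈ E ∨ n < y) y < #E := by
      rw [← count_mem_or_lt hE]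
      exact Nat.count_strict_mono (Or.inl hy) (Nat.lt_succ_of_le (mem_Icc.mp (hE hy)).2)
    exact mem_image.mpr ⟨⟨_, hv⟩, mem_univ _, Nat.nth_count (Or.inl hy)⟩

end EndpointEnum

theorem exists_oFamily_of_chainBounded {n k : ℕ} {S : Finset (ℕ × ℕ)}
    (hS : ∀ p ∈ S, 1 ≤ p.1 ∧ p.1 ≤ p.2 ∧ p.2 ≤ n) {E : Finset ℕ} (hE : E ⊆ Icc 1 n)
    (hEk : #E = k) (hchain : ChainBounded S fun x => #(E.filter (· < x))) :
    ∃ F : OFamily n k, F.endpointSet = E ∧ ∀ p ∈ S, p ∈ F.pointSet := by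
  subst hEk
  have hS' (p : ℕ × ℕ) (hp : p ∈ S) : p.1 ≤ p.2 := (hS p hp).2.1
  refine ⟨sweepFamily hS' strictMono_endpointEnum (endpointEnum_pos hE)
    fun _ => (endpointEnum_le_iff hE).mpr, ?_,
    fun p hp => mem_sweepFamily_pointSet _ _ _ _ hS ?_ hchain ?_ hp⟩
  · rw [OFamily.endpointSet, funext (sweepFamily_lastRow _ _ _ _), image_endpointEnum hE]
  · exact not_le.mp fun h => lt_irrefl _ ((endpointEnum_le_iff hE).mp h)
  · exact card_filter_lt_endpointEnum_le

/-- **Lemma 7.14.**  `e` is `T`-standard if and only if `supp(e) ⊆ 𝐅` for some family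
`𝐅` with `𝐅 ⇉ T`. -/
theorem o_standard_monomial_support (n k m : ℕ) (hm : m ≤ k) (hkn : k ≤ n)
    (T : Finset ℕ) (hT : T ⊆ Finset.Icc 1 n) (hTcard : T.card = m)
    (e : (ℕ × ℕ) →₀ ℕ) (he : ∀ x ∈ e.support, 1 ≤ x.1 ∧ x.1 ≤ x.2 ∧ x.2 ≤ n) :
    ¬ TNonstandardO n k m T e ↔
      ∃ F : OFamily n k, EtoTO n k F.endpointSet T ∧ ∀ x ∈ e.support, x ∈ F.pointSet := by
  constructor
  · intro hstd
    obtain ⟨F, hFE, hcov⟩ := exists_oFamily_of_chainBounded he (canonicalEndpoints_subset hT)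
      (card_canonicalEndpoints hT (hTcard ▸ hm) hkn)
      (chainBounded_of_not_tNonstandardO hT hTcard hm hkn he hstd)
    exact ⟨F, hFE ▸ etoTO_canonicalEndpoints hT (hTcard ▸ hm) hkn, hcov⟩
  · rintro ⟨F, hFE, hcov⟩
    exact not_tNonstandardO_of_subset_pointSet F hFE.1 hcov

end
end
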